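/- arXiv:2211.17038 — 2 statements merged into one kernel-verified Lean document; each statement's English description precedes it below -/
import Mathlib

section
/- If p and q are both odd positive integers at least 3, then the triangle Coxeter group Δ(p,q,∞) has a unique subgroup of index 2, namely its von Dyck subgroup Γ(p,q,∞). -/
/-! The parity homomorphism `Δ(p,q,∞) → ℤ/2` sending each of `a, b, c` to `1` shows that
`b ∉ Γ = ⟨ab, bc⟩`. Since `ab, ba, bc, cb ∈ Γ`, right multiplication by any generator swaps the
sets `Γ` and `Γb`, so `Γ ∪ Γb` is everything and `Γ` has index 2. Conversely a subgroup of
index 2 contains every element of odd order, in particular `ab` and `bc` when `p` and `q` are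
odd, hence contains `Γ` and equals it. -/

open FreeGroup in
/-- Relators for the triangle Coxeter group `Δ(p,q,∞)` with generators `a = 0`, `b = 1`,
`c = 2`. -/
def triangleRels (p q : ℕ∞) : Set (FreeGroup (Fin 3)) :=
  {of 0 ^ 2, of 1 ^ 2, of 2 ^ 2}
    ∪ {w | ∃ n : ℕ, (n : ℕ∞) = p ∧ w = (of 0 * of 1) ^ n}
    ∪ {w | ∃ n : ℕ, (n : ℕ∞) = q ∧ w = (of 1 * of 2) ^ n}

/-- The triangle Coxeter group `Δ(p,q,∞)`. -/
abbrev TriangleInf (p q : ℕ∞) : Type := PresentedGroup (triangleRels p q)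

namespace Subgroup

variable {G : Type*} [Group G]

theorem eq_of_le_of_index_eq {H K : Subgroup G} (hle : H ≤ K) (hindex : K.index = H.index)
    (hH : H.index ≠ 0) : H = K := by
  have hrel := relIndex_mul_index hle
  rw [hindex, mul_eq_right₀ hH, relIndex_eq_one] at hrel
  exact le_antisymm hle hrel

theorem pow_mem_iff_of_index_two_of_odd {H : Subgroup G} (h : H.index = 2) {n : ℕ} (hn : Odd n)
    (x : G) : x ^ n ∈ H ↔ x ∈ H := by
  obtain ⟨k, rfl⟩ := hn
  rw [pow_succ, pow_mul, mul_mem_cancel_left (pow_mem (sq_mem_of_index_two h x) k)]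

/-- Right multiplication by a generator or its inverse interchanges `H` and `H * b⁻¹`. -/
theorem mul_mem_or_mem_of_closure_eq_top {S : Set G} (hS : closure S = ⊤) {H : Subgroup G}
    {b : G} (hSb : ∀ s ∈ S, s * b ∈ H ∧ b⁻¹ * s ∈ H) (x : G) : x * b ∈ H ∨ x ∈ H := by
  induction (hS ▸ mem_top x : x ∈ closure S) using closure_induction_right with
  | one => exact Or.inr H.one_mem
  | mul_right x _ s hs ih =>
    rcases ih with hxb | hx
    · exact Or.inr (by simpa [mul_assoc] using H.mul_mem hxb (hSb s hs).2)
    · exact Or.inl (by simpa [mul_assoc] using H.mul_mem hx (hSb s hs).1)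
  | mul_inv_cancel x _ s hs ih =>
    rcases ih with hxb | hx
    · exact Or.inr (by simpa [mul_assoc] using H.mul_mem hxb (H.inv_mem (hSb s hs).1))
    · exact Or.inl (by simpa [mul_assoc] using H.mul_mem hx (H.inv_mem (hSb s hs).2))

end Subgroup

namespace TriangleInf

open PresentedGroup

theorem of_mul_self {p q : ℕ∞} (i : Fin 3) : (of i : TriangleInf p q) * of i = 1 := by
  have h : FreeGroup.of i ^ 2 ∈ triangleRels p q := by fin_cases i <;> simp [triangleRels]
  simpa [pow_two, of] using one_of_mem h

theorem of_inv {p q : ℕ∞} (i : Fin 3) : (of i : TriangleInf p q)⁻¹ = of i :=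
  inv_eq_of_mul_eq_one_right (of_mul_self i)

theorem of_zero_mul_of_one_pow (p : ℕ) (q : ℕ∞) :
    (of 0 * of 1 : TriangleInf p q) ^ p = 1 := by
  simpa [of] using one_of_mem (rels := triangleRels p q) (Or.inl (Or.inr ⟨p, rfl, rfl⟩))

theorem of_one_mul_of_two_pow (p : ℕ∞) (q : ℕ) :
    (of 1 * of 2 : TriangleInf p q) ^ q = 1 := by
  simpa [of] using one_of_mem (rels := triangleRels p q) (Or.inr ⟨q, rfl, rfl⟩)

def parity (p q : ℕ∞) : TriangleInf p q →* Multiplicative (ZMod 2) :=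
  toGroup (f := fun _ => Multiplicative.ofAdd 1) <| by
    have h : Multiplicative.ofAdd (1 : ZMod 2) * Multiplicative.ofAdd 1 = 1 := rfl
    rintro r (((rfl | rfl | rfl) | ⟨n, -, rfl⟩) | ⟨n, -, rfl⟩) <;> simp [pow_two, h]

theorem parity_of {p q : ℕ∞} (i : Fin 3) : parity p q (of i) = Multiplicative.ofAdd 1 :=
  toGroup.of _

/-- The von Dyck subgroup `Γ(p,q,∞) = ⟨ab, bc⟩`. -/
def vonDyck (p q : ℕ∞) : Subgroup (TriangleInf p q) :=
  Subgroup.closure {of 0 * of 1, of 1 * of 2}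

theorem vonDyck_le_ker_parity (p q : ℕ∞) : vonDyck p q ≤ (parity p q).ker := by
  rw [vonDyck, Subgroup.closure_le]
  rintro _ (rfl | rfl) <;> rw [SetLike.mem_coe, MonoidHom.mem_ker, map_mul, parity_of, parity_of] <;>
    rfl

theorem of_one_notMem_vonDyck (p q : ℕ∞) : of 1 ∉ vonDyck p q := fun h => by
  have h := vonDyck_le_ker_parity p q h
  rw [MonoidHom.mem_ker, parity_of] at h
  exact absurd h (by decide)

theorem index_vonDyck (p q : ℕ∞) : (vonDyck p q).index = 2 := by
  have hab : of 0 * of 1 ∈ vonDyck p q := Subgroup.subset_closure (Or.inl rfl)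
  have hbc : of 1 * of 2 ∈ vonDyck p q := Subgroup.subset_closure (Or.inr rfl)
  refine Subgroup.index_eq_two_iff_exists_notMem_and.mpr
    ⟨of 1, of_one_notMem_vonDyck p q,
      Subgroup.mul_mem_or_mem_of_closure_eq_top (closure_range_of _) ?_⟩
  rintro _ ⟨i, rfl⟩
  rw [of_inv]
  fin_cases i
  · exact ⟨hab, by simpa [of_inv] using (vonDyck p q).inv_mem hab⟩
  · simp [of_mul_self, (vonDyck p q).one_mem]
  · exact ⟨by simpa [of_inv] using (vonDyck p q).inv_mem hbc, hbc⟩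

theorem vonDyck_le_of_index_eq_two {p q : ℕ} (hp : Odd p) (hq : Odd q)
    {H : Subgroup (TriangleInf p q)} (hH : H.index = 2) : vonDyck p q ≤ H := by
  rw [vonDyck, Subgroup.closure_le]
  rintro _ (rfl | rfl)
  · rw [SetLike.mem_coe, ← Subgroup.pow_mem_iff_of_index_two_of_odd hH hp,
      of_zero_mul_of_one_pow]
    exact H.one_mem
  · rw [SetLike.mem_coe, ← Subgroup.pow_mem_iff_of_index_two_of_odd hH hq,
      of_one_mul_of_two_pow]
    exact H.one_mem

end TriangleInf

open TriangleInf in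
theorem unique_index_two_triangleInf_general (p q : ℕ) (hp : Odd p) (hq : Odd q) :
    (Subgroup.closure
        ({PresentedGroup.of 0 * PresentedGroup.of 1,
          PresentedGroup.of 1 * PresentedGroup.of 2} :
          Set (TriangleInf (p : ℕ∞) (q : ℕ∞)))).index = 2 ∧
    ∀ H : Subgroup (TriangleInf (p : ℕ∞) (q : ℕ∞)), H.index = 2 →
      H = Subgroup.closure
        {PresentedGroup.of 0 * PresentedGroup.of 1,
         PresentedGroup.of 1 * PresentedGroup.of 2} :=
  ⟨index_vonDyck p q, fun H hH =>
    (Subgroup.eq_of_le_of_index_eq (vonDyck_le_of_index_eq_two hp hq hH)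
      (hH.trans (index_vonDyck p q).symm) (by rw [index_vonDyck]; decide)).symm⟩

/-- For odd `p, q ≥ 3`, the triangle group `Δ(p,q,∞)` has a unique subgroup of index 2,
namely its von Dyck subgroup `Γ(p,q,∞) = ⟨ab, bc⟩`. -/
theorem unique_index_two_triangleInf (p q : ℕ) (hp : Odd p) (hq : Odd q)
    (hp3 : 3 ≤ p) (hq3 : 3 ≤ q) :
    (Subgroup.closure
        ({PresentedGroup.of 0 * PresentedGroup.of 1,
          PresentedGroup.of 1 * PresentedGroup.of 2} :
          Set (TriangleInf (p : ℕ∞) (q : ℕ∞)))).index = 2 ∧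
    ∀ H : Subgroup (TriangleInf (p : ℕ∞) (q : ℕ∞)), H.index = 2 →
      H = Subgroup.closure
        {PresentedGroup.of 0 * PresentedGroup.of 1,
         PresentedGroup.of 1 * PresentedGroup.of 2} :=
  unique_index_two_triangleInf_general p q hp hq
end

section
/- Let G = G₁ *_C G₂ be an amalgamated free product over a subgroup C, and let F ≤ G be a finite subgroup. Then F is contained in a conjugate of G₁ or of G₂. -/
/-!
Every element of `G₁ *_C G₂` outside `C` is a product `x₁ ⋯ xₙ` of letters taken alternately
from `G₁ \ C` and `G₂ \ C`, and by the normal form theorem the number `n` of syllables depends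
only on the element. Let `H` be a subgroup whose syllable lengths are bounded, and let `x ∈ H`
have maximal length `n ≥ 1`. Comparing with the lengths of `x²`, `x y` and `y x` shows that every
`y ∈ H \ C` begins and ends in the factor `Gₐ` of the first letter `u` of `x`. If `n ≥ 2`, the
length of `x⁻¹ y` shows that every `y` of length `n` begins with a letter of `u C`, so
conjugation by `u` lowers the maximal length. By induction we reach `n ≤ 1`, where `H` lies in
`Gₐ`. A finite subgroup has bounded syllable lengths.
-/

open Function

namespace Monoid.PushoutI

variable {C : Type*} [Group C] {G : Bool → Type*} [∀ i, Group (G i)] {φ : ∀ i, C →* G i}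

theorem base_range_le (i : Bool) : (base φ).range ≤ (of (φ := φ) i).range := by
  rintro _ ⟨c, rfl⟩
  exact ⟨φ i c, of_apply_eq_base φ i c⟩

variable (φ) in
inductive HasReducedForm : Bool → Bool → ℕ → PushoutI φ → Prop
  | single {i : Bool} {x : PushoutI φ} (hx : x ∈ (of (φ := φ) i).range)
      (hx' : x ∉ (base φ).range) : HasReducedForm i i 1 x
  | cons {i j : Bool} {n : ℕ} {x g : PushoutI φ} (hx : x ∈ (of (φ := φ) i).range)
      (hx' : x ∉ (base φ).range) (hg : HasReducedForm (!i) j n g) :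
      HasReducedForm i j (n + 1) (x * g)

namespace HasReducedForm

variable {i j k l : Bool} {n m : ℕ} {g h u z : PushoutI φ}

theorem one_le (hg : HasReducedForm φ i j n g) : 1 ≤ n := by
  cases hg <;> omega

theorem mul (hg : HasReducedForm φ i j n g) (hh : HasReducedForm φ k l m h) (hjk : j ≠ k) :
    HasReducedForm φ i l (n + m) (g * h) := by
  induction hg with
  | @single i x hx hx' =>
    obtain rfl : k = !i := Bool.eq_not_iff.2 hjk.symm
    rw [add_comm]
    exact cons hx hx' hh
  | cons hx hx' _ ih =>
    rw [add_right_comm, mul_assoc]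
    exact cons hx hx' (ih hjk)

theorem inv (hg : HasReducedForm φ i j n g) : HasReducedForm φ j i n g⁻¹ := by
  induction hg with
  | single hx hx' => exact single (inv_mem hx) (by rwa [inv_mem_iff])
  | cons hx hx' _ ih =>
    rw [mul_inv_rev]
    exact ih.mul (single (inv_mem hx) (by rwa [inv_mem_iff])) (by simp)

theorem mul_base (hg : HasReducedForm φ i j n g) (hz : z ∈ (base φ).range) :
    HasReducedForm φ i j n (g * z) := by
  induction hg with
  | single hx hx' =>
    exact single (mul_mem hx (base_range_le _ hz)) (mt (Subgroup.mul_mem_cancel_right _ hz).1 hx')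
  | cons hx hx' _ ih =>
    rw [mul_assoc]
    exact cons hx hx' ih

theorem base_mul (hz : z ∈ (base φ).range) (hg : HasReducedForm φ i j n g) :
    HasReducedForm φ i j n (z * g) := by
  simpa using (hg.inv.mul_base (inv_mem hz)).inv

theorem mul_mem_range_last (hg : HasReducedForm φ i j n g) (hu : u ∈ (of (φ := φ) j).range) :
    g * u ∈ (base φ).range ∨ ∃ l m, m ≤ n ∧ HasReducedForm φ i l m (g * u) := by
  induction hg with
  | @single i x hx hx' =>
    by_cases hxu : x * u ∈ (base φ).range
    · exact .inl hxu
    · exact .inr ⟨i, 1, le_rfl, single (mul_mem hx hu) hxu⟩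
  | cons hx hx' _ ih =>
    rw [mul_assoc]
    rcases ih hu with hgu | ⟨l, m, hm, hgu⟩
    · exact .inr ⟨_, 1, by omega, single (mul_mem hx (base_range_le _ hgu))
        (mt (Subgroup.mul_mem_cancel_right _ hgu).1 hx')⟩
    · exact .inr ⟨l, m + 1, by omega, cons hx hx' hgu⟩

end HasReducedForm

theorem mem_base_or_hasReducedForm_mul {g u : PushoutI φ}
    (hg : g ∈ (base φ).range ∨ ∃ i j n, HasReducedForm φ i j n g)
    {c : Bool} (hu : u ∈ (of (φ := φ) c).range) :
    g * u ∈ (base φ).range ∨ ∃ i j n, HasReducedForm φ i j n (g * u) := by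
  by_cases hgu : g * u ∈ (base φ).range
  · exact .inl hgu
  refine .inr ?_
  rcases hg with hg | ⟨i, j, n, hg⟩
  · exact ⟨c, c, 1, .single (mul_mem (base_range_le c hg) hu) hgu⟩
  by_cases hu' : u ∈ (base φ).range
  · exact ⟨i, j, n, hg.mul_base hu'⟩
  rcases eq_or_ne c j with rfl | hcj
  · obtain h | ⟨l, m, -, h⟩ := hg.mul_mem_range_last hu
    exacts [absurd h hgu, ⟨i, l, m, h⟩]
  · exact ⟨i, c, n + 1, hg.mul (.single hu hu') hcj.symm⟩

theorem mem_base_or_hasReducedForm (g : PushoutI φ) :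
    g ∈ (base φ).range ∨ ∃ i j n, HasReducedForm φ i j n g := by
  suffices ∀ x g : PushoutI φ, (g ∈ (base φ).range ∨ ∃ i j n, HasReducedForm φ i j n g) →
      g * x ∈ (base φ).range ∨ ∃ i j n, HasReducedForm φ i j n (g * x) by
    simpa using this g 1 (.inl (one_mem _))
  intro x
  induction x using PushoutI.induction_on with
  | of c u => exact fun g hg => mem_base_or_hasReducedForm_mul hg ⟨u, rfl⟩
  | base c =>
    rw [← of_apply_eq_base φ false]
    exact fun g hg => mem_base_or_hasReducedForm_mul hg ⟨_, rfl⟩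
  | mul x y hx hy =>
    intro g hg
    rw [← mul_assoc]
    exact hy _ (hx g hg)

theorem exists_reduced_word_cons {i : Bool} {x : PushoutI φ} (hx : x ∈ (of (φ := φ) i).range)
    (hx' : x ∉ (base φ).range) {w : CoprodI.Word G} (hw : Reduced φ w)
    (hwi : w.fstIdx ≠ some i) :
    ∃ w' : CoprodI.Word G, Reduced φ w' ∧ ofCoprodI w'.prod = x * ofCoprodI w.prod ∧
      w'.fstIdx = some i := by
  obtain ⟨x₀, rfl⟩ := hx
  have hx₀ : x₀ ∉ (φ i).range := by
    rintro ⟨c, rfl⟩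
    exact hx' ⟨c, (of_apply_eq_base φ i c).symm⟩
  have hx₀1 : x₀ ≠ 1 := fun h => hx₀ (h ▸ one_mem _)
  refine ⟨.cons x₀ w hwi hx₀1, ?_, by simp, by simp⟩
  intro l hl
  rcases List.mem_cons.1 hl with rfl | hl
  exacts [hx₀, hw l hl]

namespace HasReducedForm

variable {i j k l : Bool} {n m : ℕ} {g : PushoutI φ}

theorem exists_reduced_word (hg : HasReducedForm φ i j n g) :
    ∃ w : CoprodI.Word G, Reduced φ w ∧ ofCoprodI w.prod = g ∧ w.fstIdx = some i := by
  induction hg with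
  | single hx hx' =>
    simpa using exists_reduced_word_cons hx hx' (w := .empty)
      (by simp [Reduced, CoprodI.Word.empty]) (by simp [CoprodI.Word.fstIdx, CoprodI.Word.empty])
  | cons hx hx' _ ih =>
    obtain ⟨w, hw, rfl, hwi⟩ := ih
    exact exists_reduced_word_cons hx hx' hw (by simp [hwi])

theorem notMem_base (hφ : ∀ i, Injective (φ i)) (hg : HasReducedForm φ i j n g) :
    g ∉ (base φ).range := by
  obtain ⟨w, hw, rfl, hwi⟩ := hg.exists_reduced_word
  intro hmem
  simp [hw.eq_empty_of_mem_range hφ hmem, CoprodI.Word.fstIdx, CoprodI.Word.empty] at hwi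

theorem last_eq (hφ : ∀ i, Injective (φ i)) (h₁ : HasReducedForm φ i j n g)
    (h₂ : HasReducedForm φ k l m g) : j = l := by
  by_contra hjl
  have h := h₁.mul h₂.inv hjl
  rw [mul_inv_cancel] at h
  exact h.notMem_base hφ (one_mem _)

theorem head_eq (hφ : ∀ i, Injective (φ i)) (h₁ : HasReducedForm φ i j n g)
    (h₂ : HasReducedForm φ k l m g) : i = k :=
  h₁.inv.last_eq hφ h₂.inv

theorem notMem_range_of_ne (hφ : ∀ i, Injective (φ i)) (hg : HasReducedForm φ i j n g)
    (hk : k ≠ i) : g ∉ (of (φ := φ) k).range :=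
  fun hmem => hk ((single hmem (hg.notMem_base hφ)).head_eq hφ hg)

theorem length_eq (hφ : ∀ i, Injective (φ i)) (h₁ : HasReducedForm φ i j n g)
    (h₂ : HasReducedForm φ k l m g) : n = m := by
  induction h₁ generalizing k l m with
  | @single i x hx hx' =>
    obtain rfl := (single hx hx').head_eq hφ h₂
    cases h₂ with
    | single => rfl
    | cons hy _ hh =>
      exact absurd (by simpa using mul_mem (inv_mem hy) hx) (hh.notMem_range_of_ne hφ (by simp))
  | @cons i j n x g hx hx' hg ih =>
    obtain rfl := (cons hx hx' hg).head_eq hφ h₂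
    generalize hxg : x * g = g' at h₂
    cases h₂ with
    | single hy _ =>
      subst hxg
      exact absurd (by simpa using mul_mem (inv_mem hx) hy) (hg.notMem_range_of_ne hφ (by simp))
    | @cons _ _ m y h hy _ hh =>
      have hh' : h = (y⁻¹ * x) * g := by rw [mul_assoc, hxg, inv_mul_cancel_left]
      -- `y⁻¹ x ∈ G i`; outside the base it would make `h` start in `G i` rather than `G (!i)`
      by_cases hyx : y⁻¹ * x ∈ (base φ).range
      · have hg' := hh.base_mul (inv_mem hyx)
        rw [hh', inv_mul_cancel_left] at hg'
        rw [ih hg']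
      · have := (cons (mul_mem (inv_mem hy) hx) hyx hg).head_eq hφ (hh' ▸ hh)
        simp at this

end HasReducedForm

/-- Elements of the base have no reduced form and get length `sInf ∅ = 0`. -/
noncomputable def syllableLength (g : PushoutI φ) : ℕ :=
  sInf {n | ∃ i j, HasReducedForm φ i j n g}

variable {i j : Bool} {n : ℕ} {g u z : PushoutI φ}

theorem HasReducedForm.syllableLength_eq (hφ : ∀ i, Injective (φ i))
    (hg : HasReducedForm φ i j n g) : syllableLength g = n := by
  obtain ⟨k, l, hm⟩ := Nat.sInf_mem (s := {n | ∃ i j, HasReducedForm φ i j n g}) ⟨n, i, j, hg⟩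
  exact (hg.length_eq hφ hm).symm

theorem syllableLength_eq_zero_iff (hφ : ∀ i, Injective (φ i)) :
    syllableLength g = 0 ↔ g ∈ (base φ).range := by
  refine ⟨fun h => ?_, fun h => Nat.sInf_eq_zero.2 (.inr ?_)⟩
  · rcases mem_base_or_hasReducedForm g with hg | ⟨i, j, n, hg⟩
    · exact hg
    · have := hg.one_le
      rw [← hg.syllableLength_eq hφ] at this
      omega
  · exact Set.eq_empty_of_forall_notMem fun n ⟨i, j, hg⟩ => hg.notMem_base hφ h

theorem exists_hasReducedForm_syllableLength (hφ : ∀ i, Injective (φ i))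
    (hg : g ∉ (base φ).range) : ∃ i j, HasReducedForm φ i j (syllableLength g) g := by
  rcases mem_base_or_hasReducedForm g with hg' | ⟨i, j, n, hg'⟩
  · exact absurd hg' hg
  · exact ⟨i, j, hg'.syllableLength_eq hφ ▸ hg'⟩

theorem syllableLength_le_one_of_mem_range (hφ : ∀ i, Injective (φ i))
    (hg : g ∈ (of (φ := φ) i).range) : syllableLength g ≤ 1 := by
  by_cases hg' : g ∈ (base φ).range
  · simp [(syllableLength_eq_zero_iff hφ).2 hg']
  · exact ((HasReducedForm.single hg hg').syllableLength_eq hφ).le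

theorem syllableLength_base_mul (hφ : ∀ i, Injective (φ i)) (hz : z ∈ (base φ).range) :
    syllableLength (z * g) = syllableLength g := by
  by_cases hg : g ∈ (base φ).range
  · rw [(syllableLength_eq_zero_iff hφ).2 hg, (syllableLength_eq_zero_iff hφ).2 (mul_mem hz hg)]
  · obtain ⟨i, j, hg⟩ := exists_hasReducedForm_syllableLength hφ hg
    exact (hg.base_mul hz).syllableLength_eq hφ

theorem HasReducedForm.syllableLength_mul_le (hφ : ∀ i, Injective (φ i))
    (hg : HasReducedForm φ i j n g) (hu : u ∈ (of (φ := φ) j).range) :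
    syllableLength (g * u) ≤ n := by
  rcases hg.mul_mem_range_last hu with hgu | ⟨l, m, hm, hgu⟩
  · simp [(syllableLength_eq_zero_iff hφ).2 hgu]
  · exact (hgu.syllableLength_eq hφ).le.trans hm

theorem HasReducedForm.mem_range_of_le_one (hg : HasReducedForm φ i j n g) (hn : n ≤ 1) :
    g ∈ (of (φ := φ) i).range := by
  cases hg with
  | single hx => exact hx
  | cons _ _ hg => exact absurd hg.one_le (by omega)

theorem HasReducedForm.head_last_eq_of_maximal (hφ : ∀ i, Injective (φ i))
    {H : Subgroup (PushoutI φ)} (hH : ∀ y ∈ H, syllableLength y ≤ n)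
    {x : PushoutI φ} (hx : HasReducedForm φ i j n x) (hxH : x ∈ H)
    {k l : Bool} {m : ℕ} {y : PushoutI φ} (hy : HasReducedForm φ k l m y) (hyH : y ∈ H) :
    k = j ∧ l = i := by
  have hm := hy.one_le
  constructor
  · by_contra hkj
    have := (hx.mul hy (Ne.symm hkj)).syllableLength_eq hφ ▸ hH _ (mul_mem hxH hyH)
    omega
  · by_contra hli
    have := (hy.mul hx hli).syllableLength_eq hφ ▸ hH _ (mul_mem hyH hxH)
    omega

theorem syllableLength_conj_le (hφ : ∀ i, Injective (φ i)) {H : Subgroup (PushoutI φ)}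
    {N : ℕ} (hH : ∀ y ∈ H, syllableLength y ≤ N + 1) {a : Bool} {u x : PushoutI φ}
    (hu : u ∈ (of (φ := φ) a).range) (hu' : u ∉ (base φ).range)
    (hx : HasReducedForm φ (!a) a N x) (huxH : u * x ∈ H) {y : PushoutI φ} (hyH : y ∈ H) :
    syllableLength (u⁻¹ * y * u) ≤ N := by
  have hN := hx.one_le
  by_cases hy : y ∈ (base φ).range
  · exact (syllableLength_le_one_of_mem_range hφ
      (mul_mem (mul_mem (inv_mem hu) (base_range_le a hy)) hu)).trans hN
  obtain ⟨k, l, hyf⟩ := exists_hasReducedForm_syllableLength hφ hy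
  obtain ⟨rfl, rfl⟩ := (HasReducedForm.cons hu hu' hx).head_last_eq_of_maximal hφ hH huxH hyf hyH
  have hyN := hH y hyH
  generalize syllableLength y = m at hyf hyN
  cases hyf with
  | single hv => exact (syllableLength_le_one_of_mem_range hφ
      (mul_mem (mul_mem (inv_mem hu) hv) hu)).trans hN
  | @cons _ _ m v y hv hv' hy' =>
    by_cases huv : u⁻¹ * v ∈ (base φ).range
    · rw [mul_assoc, mul_assoc, ← mul_assoc u⁻¹, syllableLength_base_mul hφ huv]
      exact (hy'.syllableLength_mul_le hφ hu).trans (by omega)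
    · -- otherwise `(u x)⁻¹ (v y) = x⁻¹ (u⁻¹ v) y` would have `N + 1 + m > N + 1` syllables
      have hlong := (hx.inv.mul (.single (mul_mem (inv_mem hu) hv) huv) (by simp)).mul hy'
        (by simp)
      have hmem : x⁻¹ * (u⁻¹ * v) * y ∈ H := by
        simpa [mul_assoc] using mul_mem (inv_mem huxH) hyH
      have := hlong.syllableLength_eq hφ ▸ hH _ hmem
      have := hy'.one_le
      omega

theorem exists_conj_mem_range_of_forall_syllableLength_le (hφ : ∀ i, Injective (φ i))
    (N : ℕ) (H : Subgroup (PushoutI φ)) (hH : ∀ y ∈ H, syllableLength y ≤ N) :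
    ∃ (i : Bool) (g : PushoutI φ), ∀ x ∈ H, g⁻¹ * x * g ∈ (of (φ := φ) i).range := by
  induction N generalizing H with
  | zero =>
    refine ⟨false, 1, fun x hx => ?_⟩
    simpa using base_range_le false ((syllableLength_eq_zero_iff hφ).1 (Nat.le_zero.1 (hH x hx)))
  | succ N ih =>
    by_cases hle : ∀ y ∈ H, syllableLength y ≤ N
    · exact ih H hle
    push Not at hle
    obtain ⟨x, hxH, hxN⟩ := hle
    have hx : x ∉ (base φ).range := fun h => by simp [(syllableLength_eq_zero_iff hφ).2 h] at hxN
    obtain ⟨a, b, hxf⟩ := exists_hasReducedForm_syllableLength hφ hx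
    rw [le_antisymm (hH x hxH) hxN] at hxf
    obtain ⟨rfl, -⟩ := hxf.head_last_eq_of_maximal hφ hH hxH hxf hxH
    cases hxf with
    | single hu hu' =>
      refine ⟨a, 1, fun y hyH => ?_⟩
      rw [inv_one, one_mul, mul_one]
      by_cases hy : y ∈ (base φ).range
      · exact base_range_le a hy
      obtain ⟨k, l, hyf⟩ := exists_hasReducedForm_syllableLength hφ hy
      obtain ⟨rfl, -⟩ := (HasReducedForm.single hu hu').head_last_eq_of_maximal hφ hH hxH hyf hyH
      exact hyf.mem_range_of_le_one (hH y hyH)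
    | @cons _ _ _ u x hu hu' hx' =>
      obtain ⟨i, g, hg⟩ := ih (H.map (MulAut.conj u⁻¹).toMonoidHom) (by
        rintro _ ⟨y, hyH, rfl⟩
        simpa using syllableLength_conj_le hφ hH hu hu' hx' hxH hyH)
      refine ⟨i, u * g, fun y hyH => ?_⟩
      simpa [mul_assoc] using hg _ ⟨y, hyH, rfl⟩

end Monoid.PushoutI

open Monoid in
/-- Serre's theorem: a finite subgroup of an amalgamated free product `G₁ *_C G₂`
(realized as the pushout of the family of injections `φ i : C →* G i`, `i : Bool`)
is contained in a conjugate of one of the factors. -/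
theorem finite_subgroup_of_amalgam_conjugate_into_factor
    {C : Type*} [Group C] {G : Bool → Type*} [∀ i, Group (G i)]
    (φ : ∀ i, C →* G i) (hφ : ∀ i, Function.Injective (φ i))
    (F : Subgroup (PushoutI φ)) (hF : Finite F) :
    ∃ (i : Bool) (g : PushoutI φ), ∀ x ∈ F,
      g⁻¹ * x * g ∈ (PushoutI.of (φ := φ) i).range := by
  obtain ⟨N, hN⟩ := ((Set.toFinite (F : Set (PushoutI φ))).image PushoutI.syllableLength).bddAbove
  exact PushoutI.exists_conj_mem_range_of_forall_syllableLength_le hφ N F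
    fun y hy => hN ⟨y, hy, rfl⟩
end
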